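/- Let α0,α1,α2,α3,α4 be complex numbers with α0+α1+2α2+2α3+2α4=1, and let (x,y,z,w) be a solution of the Sasano system B4(α0,α1,α2,α3,α4) on an annulus {|t|>R} such that each of x,y,z,w has at worst a pole at t=∞. Then z has a pole at t=∞ of some order n ≥ 1, and x, y, w are all holomorphic at t=∞ (each has a finite limit as t→∞). -/

import Mathlib

open Filter Topology Polynomial

noncomputable section

/-- The four equations of the Sasano system of type `B₄⁽¹⁾` at the point `t`. -/
def B4Eqs (a0 a1 a2 a3 a4 : ℂ) (x y z w : ℂ → ℂ) (t : ℂ) : Prop :=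
  (t * deriv x t =
      2 * x t ^ 2 * y t - x t ^ 2 + (1 - 2*a2 - 2*a3 - 2*a4) * x t
        + 2 * a3 * z t + 2 * z t ^ 2 * w t + t) ∧
  (t * deriv y t =
      -2 * x t * y t ^ 2 + 2 * x t * y t - (1 - 2*a2 - 2*a3 - 2*a4) * y t + a1) ∧
  (t * deriv z t =
      2 * z t ^ 2 * w t - z t ^ 2 + (1 - 2*a4) * z t + 2 * y t * z t ^ 2 + t) ∧
  (t * deriv w t =
      -2 * z t * w t ^ 2 + 2 * z t * w t - (1 - 2*a4) * w t
        - 2 * a3 * y t - 4 * y t * z t * w t + a3)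

/-- `(x,y,z,w)` is a holomorphic solution of the Sasano system `B₄⁽¹⁾` on the set `s`. -/
def SolvesB4On (a0 a1 a2 a3 a4 : ℂ) (x y z w : ℂ → ℂ) (s : Set ℂ) : Prop :=
  ∀ t ∈ s, DifferentiableAt ℂ x t ∧ DifferentiableAt ℂ y t ∧
    DifferentiableAt ℂ z t ∧ DifferentiableAt ℂ w t ∧ B4Eqs a0 a1 a2 a3 a4 x y z w t

/-- The filter of neighbourhoods of `t = ∞` in `ℂ`. -/
def atInfty : Filter ℂ := Filter.comap (fun t : ℂ => ‖t‖) Filter.atTop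

/-- `f` is holomorphic at `t = ∞`: `f(t)` has a finite limit as `t → ∞`. -/
def HoloAtInfty (f : ℂ → ℂ) : Prop := ∃ L : ℂ, Tendsto f atInfty (𝓝 L)

/-- `f` has a pole of order `n ≥ 1` at `t = ∞`: `t⁻ⁿ·f(t)` has a finite nonzero limit
as `t → ∞`. -/
def PoleAtInftyOfOrder (f : ℂ → ℂ) (n : ℕ) : Prop :=
  ∃ L : ℂ, L ≠ 0 ∧ Tendsto (fun t => f t / t ^ n) atInfty (𝓝 L)

/-- `f` has at worst a pole at `t = ∞`: `t⁻ᵐ·f(t) → 0` as `t → ∞` for some `m ≥ 0`. -/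
def AtWorstPoleAtInfty (f : ℂ → ℂ) : Prop :=
  ∃ m : ℕ, Tendsto (fun t => f t / t ^ m) atInfty (𝓝 0)

/-!
Near `t = ∞` each component `f` is meromorphic in `1/t`, so it is either eventually zero or
`f ~ C t^d` with `C ≠ 0`, and then also `t f' ~ d C t^d`. Comparing leading powers of `t` on
both sides of the four equations (dominant balance) rules out a pole of `y`, then a pole of `w`,
and forces `z` to have a pole, because the term `t` of the `z`-equation must be balanced.
Then `z² (2y + 2w - 1) = O(tʳ)` gives `2y + 2w - 1 → 0`; the `w`-equation shows `z w²` is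
bounded, so `w → 0` and `y → 1/2`; finally the `y`-equation expresses `x` as
`(t y' + (1 - 2α₂ - 2α₃ - 2α₄) y - α₁) / (2y(1 - y))`, a quotient of convergent functions whose
denominator tends to `1/2`.
-/

lemma atInfty_eq_cobounded : atInfty = Bornology.cobounded ℂ := comap_norm_atTop

instance : atInfty.NeBot := atInfty_eq_cobounded ▸ inferInstance

lemma tendsto_norm_atInfty : Tendsto (‖·‖) atInfty atTop := tendsto_comap

lemma eventually_ne_zero_atInfty : ∀ᶠ t : ℂ in atInfty, t ≠ 0 :=
  (tendsto_norm_atInfty.eventually_gt_atTop 0).mono fun _ => norm_pos_iff.1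

lemma tendsto_zpow_atInfty_zero {k : ℤ} (hk : k < 0) :
    Tendsto (fun t : ℂ => t ^ k) atInfty (𝓝 0) := by
  rw [tendsto_zero_iff_norm_tendsto_zero]
  simp only [norm_zpow]
  exact (tendsto_zpow_atTop_zero hk).comp tendsto_norm_atInfty

lemma tendsto_inv_atInfty_nhdsNE : Tendsto (·⁻¹) atInfty (𝓝[≠] (0 : ℂ)) :=
  atInfty_eq_cobounded ▸ tendsto_inv₀_cobounded'

lemma tendsto_inv_atInfty_zero : Tendsto (·⁻¹) atInfty (𝓝 (0 : ℂ)) :=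
  tendsto_inv_atInfty_nhdsNE.mono_right nhdsWithin_le_nhds

lemma tendsto_inv_nhdsNE_atInfty : Tendsto (·⁻¹) (𝓝[≠] (0 : ℂ)) atInfty :=
  atInfty_eq_cobounded ▸ tendsto_inv₀_nhdsNE_zero

lemma eventually_eventually_nhds_atInfty {p : ℂ → Prop} (h : ∀ᶠ t in atInfty, p t) :
    ∀ᶠ t in atInfty, ∀ᶠ s in 𝓝 t, p s := by
  obtain ⟨M, -, hM⟩ := (atTop_basis_Ioi.comap (‖·‖)).eventually_iff.1 h
  have hopen : IsOpen {t : ℂ | M < ‖t‖} := isOpen_lt continuous_const continuous_norm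
  filter_upwards [tendsto_norm_atInfty.eventually_gt_atTop M] with t ht
  exact eventually_of_mem (hopen.mem_nhds ht) fun _ hs => hM hs

lemma Filter.EventuallyEq.deriv_atInfty {f g : ℂ → ℂ} (h : f =ᶠ[atInfty] g) :
    deriv f =ᶠ[atInfty] deriv g :=
  (eventually_eventually_nhds_atInfty h).mono fun _ => EventuallyEq.deriv_eq

/-- `f t ~ C tᵈ` as `t → ∞`; `C = 0` is allowed and means `f t = o(tᵈ)`. -/
def Asymp (f : ℂ → ℂ) (d : ℤ) (C : ℂ) : Prop :=
  Tendsto (fun t => f t / t ^ d) atInfty (𝓝 C)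

def AsympDeriv (f : ℂ → ℂ) (d : ℤ) (C : ℂ) : Prop :=
  Asymp f d C ∧ Asymp (fun t => t * deriv f t) d (d * C)

lemma asymp_zero_iff {f : ℂ → ℂ} {C : ℂ} : Asymp f 0 C ↔ Tendsto f atInfty (𝓝 C) := by
  simp [Asymp]

lemma asymp_zpow (d : ℤ) : Asymp (fun t => t ^ d) d 1 :=
  tendsto_const_nhds.congr' <| eventually_ne_zero_atInfty.mono fun _ ht =>
    (div_self (zpow_ne_zero d ht)).symm

lemma asymp_id : Asymp (fun t => t) 1 1 := by
  simpa using asymp_zpow 1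

lemma asymp_const (c : ℂ) : Asymp (fun _ => c) 0 c :=
  asymp_zero_iff.2 tendsto_const_nhds

lemma AtWorstPoleAtInfty.exists_asymp {f : ℂ → ℂ} (hf : AtWorstPoleAtInfty f) :
    ∃ m : ℕ, Asymp f m 0 := by
  obtain ⟨m, hm⟩ := hf
  exact ⟨m, by simpa [Asymp] using hm⟩

namespace Asymp

variable {f g : ℂ → ℂ} {d e : ℤ} {C D : ℂ}

lemma congr (h : Asymp f d C) (hfg : f =ᶠ[atInfty] g) : Asymp g d C :=
  h.congr' <| hfg.mono fun t ht => by simp only [ht]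

lemma unique (h : Asymp f d C) (h' : Asymp f d D) : C = D := tendsto_nhds_unique h h'

lemma add (hf : Asymp f d C) (hg : Asymp g d D) : Asymp (fun t => f t + g t) d (C + D) := by
  simpa only [Asymp, add_div] using Tendsto.add hf hg

lemma sub (hf : Asymp f d C) (hg : Asymp g d D) : Asymp (fun t => f t - g t) d (C - D) := by
  simpa only [Asymp, sub_div] using Tendsto.sub hf hg

lemma const_mul (a : ℂ) (h : Asymp f d C) : Asymp (fun t => a * f t) d (a * C) := by
  simpa only [Asymp, mul_div_assoc] using Tendsto.const_mul a h

lemma mul (hf : Asymp f d C) (hg : Asymp g e D) :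
    Asymp (fun t => f t * g t) (d + e) (C * D) :=
  (Tendsto.mul hf hg).congr' <| eventually_ne_zero_atInfty.mono fun t ht => by
    simp only [div_mul_div_comm, zpow_add₀ ht]

lemma div (hf : Asymp f d C) (hg : Asymp g e D) (hD : D ≠ 0) :
    Asymp (fun t => f t / g t) (d - e) (C / D) :=
  (Tendsto.div hf hg hD).congr' <| eventually_ne_zero_atInfty.mono fun t ht => by
    simp only [Pi.div_apply, zpow_sub₀ ht]
    ring

lemma eventually_ne_zero (h : Asymp f d C) (hC : C ≠ 0) : ∀ᶠ t in atInfty, f t ≠ 0 :=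
  (h.eventually_ne hC).mono fun t ht h0 => ht (by simp [h0])

lemma of_lt (h : Asymp f d C) (hde : d < e) : Asymp f e 0 := by
  have := (Tendsto.mul h (tendsto_zpow_atInfty_zero (sub_neg.2 hde))).congr' <|
    eventually_ne_zero_atInfty.mono fun t ht => by
      rw [zpow_sub₀ ht, div_mul_div_comm, mul_comm (t ^ d),
        mul_div_mul_right _ _ (zpow_ne_zero d ht)]
  simpa [Asymp] using this

lemma exists_of_le (h : Asymp f d C) (hde : d ≤ e) : ∃ C', Asymp f e C' := by
  rcases hde.lt_or_eq with hde | rfl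
  exacts [⟨0, h.of_lt hde⟩, ⟨C, h⟩]

lemma tendsto_zero_of_neg (h : Asymp f d C) (hd : d < 0) : Tendsto f atInfty (𝓝 0) :=
  asymp_zero_iff.1 (h.of_lt hd)

end Asymp

namespace AsympDeriv

variable {f g : ℂ → ℂ} {d e : ℤ} {C : ℂ}

lemma of_lt (h : AsympDeriv f d C) (hde : d < e) : AsympDeriv f e 0 :=
  ⟨h.1.of_lt hde, by simpa using h.2.of_lt hde⟩

lemma congr (h : AsympDeriv f d C) (hfg : f =ᶠ[atInfty] g) : AsympDeriv g d C :=
  ⟨h.1.congr hfg, h.2.congr <| hfg.deriv_atInfty.mono fun t ht => by simp only [ht]⟩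

end AsympDeriv

lemma meromorphicAt_comp_inv_zero {f : ℂ → ℂ} (hf : ∀ᶠ t in atInfty, DifferentiableAt ℂ f t)
    (hp : AtWorstPoleAtInfty f) : MeromorphicAt (fun u => f u⁻¹) 0 := by
  obtain ⟨m, hm⟩ := hp
  refine ⟨m + 1, Complex.analyticAt_of_differentiable_on_punctured_nhds_of_continuousAt ?_ ?_⟩
  · filter_upwards [tendsto_inv_nhdsNE_atInfty.eventually hf, self_mem_nhdsWithin] with u hu hu0
    exact (differentiableAt_id.sub_const 0).pow _ |>.smul (hu.comp u (differentiableAt_inv hu0))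
  · rw [← continuousWithinAt_compl_self, ContinuousWithinAt]
    have hlim : Tendsto (fun u : ℂ => u * (f u⁻¹ / u⁻¹ ^ m)) (𝓝[≠] 0) (𝓝 0) := by
      simpa using (tendsto_nhdsWithin_of_tendsto_nhds tendsto_id).mul
        (hm.comp tendsto_inv_nhdsNE_atInfty)
    simp only [sub_zero, smul_eq_mul, zero_pow m.succ_ne_zero, zero_mul]
    exact hlim.congr fun u => by rw [inv_pow, div_inv_eq_mul]; ring

lemma eventuallyEq_zero_or_zpow_mul_comp_inv {f : ℂ → ℂ}
    (hf : ∀ᶠ t in atInfty, DifferentiableAt ℂ f t) (hp : AtWorstPoleAtInfty f) :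
    f =ᶠ[atInfty] 0 ∨ ∃ d : ℤ, ∃ h : ℂ → ℂ, AnalyticAt ℂ h 0 ∧ h 0 ≠ 0 ∧
      f =ᶠ[atInfty] fun t => t ^ d * h t⁻¹ := by
  cases hord : meromorphicOrderAt (fun u => f u⁻¹) 0 with
  | top =>
    left
    filter_upwards [tendsto_inv_atInfty_nhdsNE.eventually (meromorphicOrderAt_eq_top_iff.1 hord)]
      with t ht
    simpa using ht
  | coe k =>
    right
    obtain ⟨h, han, h0, heq⟩ :=
      (meromorphicOrderAt_eq_int_iff (meromorphicAt_comp_inv_zero hf hp)).1 hord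
    refine ⟨-k, h, han, h0, ?_⟩
    filter_upwards [tendsto_inv_atInfty_nhdsNE.eventually heq] with t ht
    simpa [zpow_neg] using ht

lemma asympDeriv_zpow_mul_comp_inv (d : ℤ) {h : ℂ → ℂ} (hh : AnalyticAt ℂ h 0) :
    AsympDeriv (fun t => t ^ d * h t⁻¹) d (h 0) := by
  have hlim : Asymp (fun t => h t⁻¹) 0 (h 0) :=
    asymp_zero_iff.2 <| hh.continuousAt.tendsto.comp tendsto_inv_atInfty_zero
  have hlim' : Asymp (fun t => deriv h t⁻¹) 0 (deriv h 0) :=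
    asymp_zero_iff.2 <| hh.deriv.continuousAt.tendsto.comp tendsto_inv_atInfty_zero
  have hderiv : (fun t => d * (t ^ d * h t⁻¹) - t ^ (d - 1) * deriv h t⁻¹) =ᶠ[atInfty]
      fun t => t * deriv (fun s => s ^ d * h s⁻¹) t := by
    filter_upwards [eventually_ne_zero_atInfty,
      tendsto_inv_atInfty_zero.eventually hh.eventually_analyticAt] with t ht hht
    have hd : HasDerivAt (fun s => s ^ d * h s⁻¹)
        (d * t ^ (d - 1) * h t⁻¹ + t ^ d * (deriv h t⁻¹ * -(t ^ 2)⁻¹)) t :=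
      (hasDerivAt_zpow d t (Or.inl ht)).mul
        (hht.differentiableAt.hasDerivAt.comp t (hasDerivAt_inv ht))
    rw [hd.deriv, zpow_sub_one₀ ht]
    field_simp
    ring
  refine ⟨by simpa using (asymp_zpow d).mul hlim, ?_⟩
  have h1 : Asymp (fun t => d * (t ^ d * h t⁻¹)) d (d * h 0) := by
    simpa using ((asymp_zpow d).mul hlim).const_mul (d : ℂ)
  have h2 : Asymp (fun t => t ^ (d - 1) * deriv h t⁻¹) d 0 :=
    ((asymp_zpow (d - 1)).mul hlim').of_lt (by omega)
  simpa using (h1.sub h2).congr hderiv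

lemma AtWorstPoleAtInfty.asympDeriv_zero_or_leading {f : ℂ → ℂ}
    (hf : ∀ᶠ t in atInfty, DifferentiableAt ℂ f t) (hp : AtWorstPoleAtInfty f) :
    (∀ d, AsympDeriv f d 0) ∨ ∃ d C, C ≠ 0 ∧ AsympDeriv f d C := by
  rcases eventuallyEq_zero_or_zpow_mul_comp_inv hf hp with hzero | ⟨d, h, hh, h0, heq⟩
  · refine Or.inl fun d => ?_
    simpa using (asympDeriv_zpow_mul_comp_inv d (analyticAt_const (v := (0 : ℂ)))).congr
      (hzero.mono fun t ht => by simp [ht])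
  · exact Or.inr ⟨d, h 0, h0, (asympDeriv_zpow_mul_comp_inv d hh).congr heq.symm⟩

lemma AtWorstPoleAtInfty.asympDeriv_or_leading_gt {f : ℂ → ℂ}
    (hf : ∀ᶠ t in atInfty, DifferentiableAt ℂ f t) (hp : AtWorstPoleAtInfty f) (e : ℤ) :
    (∃ C, AsympDeriv f e C) ∨ ∃ d, e < d ∧ ∃ C, C ≠ 0 ∧ AsympDeriv f d C := by
  rcases hp.asympDeriv_zero_or_leading hf with hzero | ⟨d, C, hC, hd⟩
  · exact Or.inl ⟨0, hzero e⟩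
  · rcases lt_trichotomy d e with hde | rfl | hde
    exacts [Or.inl ⟨0, hd.of_lt hde⟩, Or.inl ⟨C, hd⟩, Or.inr ⟨d, hde, C, hC, hd⟩]

namespace B4

variable {a0 a1 a2 a3 a4 : ℂ} {x y z w : ℂ → ℂ}

lemma dominant_balance_z (hB4 : ∀ᶠ t in atInfty, B4Eqs a0 a1 a2 a3 a4 x y z w t)
    {D : ℤ} {c c₁ c₂ c₃ c₄ c₅ : ℂ}
    (h : Asymp (fun t => t * deriv z t) D c) (h₁ : Asymp (fun t => z t * z t * w t) D c₁)
    (h₂ : Asymp (fun t => z t * z t) D c₂) (h₃ : Asymp z D c₃)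
    (h₄ : Asymp (fun t => z t * z t * y t) D c₄) (h₅ : Asymp (fun t => t) D c₅) :
    c = 2 * c₁ - c₂ + (1 - 2 * a4) * c₃ + 2 * c₄ + c₅ :=
  h.unique <| ((((h₁.const_mul 2).sub h₂).add (h₃.const_mul _)).add (h₄.const_mul 2)).add h₅
    |>.congr <| hB4.mono fun t ht => by simp only [ht.2.2.1]; ring

lemma dominant_balance_w (hB4 : ∀ᶠ t in atInfty, B4Eqs a0 a1 a2 a3 a4 x y z w t)
    {D : ℤ} {c c₁ c₂ c₃ c₄ c₅ c₆ : ℂ}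
    (h : Asymp (fun t => t * deriv w t) D c) (h₁ : Asymp (fun t => z t * w t * w t) D c₁)
    (h₂ : Asymp (fun t => z t * w t) D c₂) (h₃ : Asymp w D c₃) (h₄ : Asymp y D c₄)
    (h₅ : Asymp (fun t => z t * w t * y t) D c₅) (h₆ : Asymp (fun _ => (1 : ℂ)) D c₆) :
    c = -2 * c₁ + 2 * c₂ - (1 - 2 * a4) * c₃ - 2 * a3 * c₄ - 4 * c₅ + a3 * c₆ :=
  h.unique <| (((((h₁.const_mul (-2)).add (h₂.const_mul 2)).sub (h₃.const_mul _)).sub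
    (h₄.const_mul (2 * a3))).sub (h₅.const_mul 4)).add (h₆.const_mul a3)
    |>.congr <| hB4.mono fun t ht => by simp only [ht.2.2.2]; ring

/-- The term `t` of the `z`-equation has nothing to balance it. -/
lemma false_of_two_mul_add_lt_one (hB4 : ∀ᶠ t in atInfty, B4Eqs a0 a1 a2 a3 a4 x y z w t)
    {r q s : ℤ} {Z Y W : ℂ} (hz : AsympDeriv z r Z) (hy : Asymp y q Y) (hw : Asymp w s W)
    (hr : 2 * r < 1) (hq : 2 * r + q < 1) (hs : 2 * r + s < 1) : False := by
  have := dominant_balance_z hB4 (hz.2.of_lt (by omega))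
    (((hz.1.mul hz.1).mul hw).of_lt (by omega)) ((hz.1.mul hz.1).of_lt (by omega))
    (hz.1.of_lt (by omega)) (((hz.1.mul hz.1).mul hy).of_lt (by omega)) asymp_id
  norm_num at this

lemma asympDeriv_x_of_pole_y (hB4 : ∀ᶠ t in atInfty, B4Eqs a0 a1 a2 a3 a4 x y z w t)
    (hxd : ∀ᶠ t in atInfty, DifferentiableAt ℂ x t) (hx : AtWorstPoleAtInfty x)
    {q : ℤ} {Y : ℂ} (hq : 1 ≤ q) (hY : Y ≠ 0) (hy : AsympDeriv y q Y) :
    ∃ X, AsympDeriv x (-q) X := by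
  refine (hx.asympDeriv_or_leading_gt hxd (-q)).resolve_right ?_
  rintro ⟨p, hp, X, hX, hxp⟩
  -- `-2xy²` alone reaches degree `p + 2q` in the `y`-equation
  have := (hy.2.of_lt (e := p + q + q) (by omega)).unique <|
    (((((hxp.1.mul hy.1).mul hy.1).const_mul (-2)).add
      (((hxp.1.mul hy.1).of_lt (by omega)).const_mul 2)).sub
      ((hy.1.of_lt (by omega)).const_mul (1 - 2 * a2 - 2 * a3 - 2 * a4))).add
      ((asymp_const a1).of_lt (by omega)) |>.congr <| hB4.mono fun t ht => by
        simp only [ht.2.1]; ring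
  exact mul_ne_zero (mul_ne_zero hX hY) hY (by linear_combination this / 2)

lemma asymp_z_terms_of_asympDeriv_x (hB4 : ∀ᶠ t in atInfty, B4Eqs a0 a1 a2 a3 a4 x y z w t)
    {q : ℤ} {X Y : ℂ} (hq : 1 ≤ q) (hx : AsympDeriv x (-q) X) (hy : Asymp y q Y) :
    Asymp (fun t => 2 * a3 * z t + 2 * z t ^ 2 * w t) 1 (-1) := by
  have := ((((hx.2.of_lt (by omega)).sub
    ((((hx.1.mul hx.1).mul hy).of_lt (by omega)).const_mul 2)).add
    ((hx.1.mul hx.1).of_lt (by omega))).sub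
    ((hx.1.of_lt (by omega)).const_mul (1 - 2 * a2 - 2 * a3 - 2 * a4))).sub asymp_id
  simpa using this.congr <| hB4.mono fun t ht => by simp only [ht.1]; ring

lemma degree_and_coeff_of_pole_yw (hB4 : ∀ᶠ t in atInfty, B4Eqs a0 a1 a2 a3 a4 x y z w t)
    {r q : ℤ} {Z Y W : ℂ} (hq : 1 ≤ q) (hZ : Z ≠ 0) (hYW : Y + W ≠ 0)
    (hz : AsympDeriv z r Z) (hy : Asymp y q Y) (hw : Asymp w q W) :
    2 * r + q = 1 ∧ 2 * (Y + W) * Z ^ 2 = -1 := by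
  have hzzw := (hz.1.mul hz.1).mul hw
  have hzzy := (hz.1.mul hz.1).mul hy
  rcases lt_trichotomy (2 * r + q) 1 with h | h | h
  · exact (false_of_two_mul_add_lt_one hB4 hz hy hw (by omega) h h).elim
  · rw [show r + r + q = 1 by omega] at hzzw hzzy
    have := dominant_balance_z hB4 (hz.2.of_lt (by omega)) hzzw
      ((hz.1.mul hz.1).of_lt (by omega)) (hz.1.of_lt (by omega)) hzzy asymp_id
    exact ⟨h, by linear_combination -this⟩
  · have := dominant_balance_z hB4 (hz.2.of_lt (by omega)) hzzw
      ((hz.1.mul hz.1).of_lt (by omega)) (hz.1.of_lt (by omega)) hzzy (asymp_id.of_lt (by omega))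
    exact absurd (by linear_combination -this / 2) (mul_ne_zero (mul_ne_zero hZ hZ) hYW)

lemma false_of_pole_w (hB4 : ∀ᶠ t in atInfty, B4Eqs a0 a1 a2 a3 a4 x y z w t)
    {s q r : ℤ} {W Y Z : ℂ} (hs : 1 ≤ s) (hqs : q < s) (hW : W ≠ 0) (hZ : Z ≠ 0)
    (hw : AsympDeriv w s W) (hy : Asymp y q Y) (hz : AsympDeriv z r Z) : False := by
  have hrs : 0 < r + s := by
    by_contra!
    exact false_of_two_mul_add_lt_one hB4 hz hy hw.1 (by omega) (by omega) (by omega)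
  -- `-2zw²` alone reaches degree `r + 2s` in the `w`-equation
  have := dominant_balance_w hB4 (hw.2.of_lt (by omega)) ((hz.1.mul hw.1).mul hw.1)
    ((hz.1.mul hw.1).of_lt (by omega)) (hw.1.of_lt (by omega)) (hy.of_lt (by omega))
    (((hz.1.mul hw.1).mul hy).of_lt (by omega)) ((asymp_const 1).of_lt (by omega))
  exact mul_ne_zero (mul_ne_zero hZ hW) hW (by linear_combination this / 2)

lemma false_of_pole_y (hB4 : ∀ᶠ t in atInfty, B4Eqs a0 a1 a2 a3 a4 x y z w t)
    (hxd : ∀ᶠ t in atInfty, DifferentiableAt ℂ x t) (hx : AtWorstPoleAtInfty x)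
    {q r : ℤ} {Y Z W : ℂ} (hq : 1 ≤ q) (hY : Y ≠ 0) (hZ : Z ≠ 0)
    (hy : AsympDeriv y q Y) (hz : AsympDeriv z r Z) (hw : AsympDeriv w q W) : False := by
  have hrq : 0 < r + q := by
    by_contra!
    exact false_of_two_mul_add_lt_one hB4 hz hy.1 hw.1 (by omega) (by omega) (by omega)
  have hW : W * (W + 2 * Y) = 0 := by
    have := dominant_balance_w hB4 (hw.2.of_lt (by omega)) ((hz.1.mul hw.1).mul hw.1)
      ((hz.1.mul hw.1).of_lt (by omega)) (hw.1.of_lt (by omega)) (hy.1.of_lt (by omega))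
      ((hz.1.mul hw.1).mul hy.1) ((asymp_const 1).of_lt (by omega))
    have hZW : Z * (W * (W + 2 * Y)) = 0 := by linear_combination this / 2
    exact (mul_eq_zero.1 hZW).resolve_left hZ
  have hYW : Y + W ≠ 0 := by
    rcases mul_eq_zero.1 hW with h | h
    · simpa [h] using hY
    · exact fun h' => hY (by linear_combination h - h')
  obtain ⟨hdeg, hcoef⟩ := degree_and_coeff_of_pole_yw hB4 hq hZ hYW hz hy.1 hw.1
  -- the `x`-equation and the `z`-equation assign incompatible values to `Z²W`
  obtain ⟨X, hxq⟩ := asympDeriv_x_of_pole_y hB4 hxd hx hq hY hy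
  have hzzw := (hz.1.mul hz.1).mul hw.1
  rw [show r + r + q = 1 by omega] at hzzw
  have hzw := (asymp_z_terms_of_asympDeriv_x hB4 hq hxq hy.1).unique <|
    (((hz.1.of_lt (by omega)).const_mul (2 * a3)).add (hzzw.const_mul 2)).congr
      (.of_forall fun t => by ring)
  have hW2 : W + 2 * Y = 0 := (mul_eq_zero.1 hW).resolve_left fun h => by simp [h] at hzw
  exact one_ne_zero (by linear_combination 2 * hcoef - 2 * Z ^ 2 * hW2 + hzw : (1 : ℂ) = 0)

lemma exists_leading_z (hB4 : ∀ᶠ t in atInfty, B4Eqs a0 a1 a2 a3 a4 x y z w t)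
    (hzd : ∀ᶠ t in atInfty, DifferentiableAt ℂ z t) (hy : AtWorstPoleAtInfty y)
    (hz : AtWorstPoleAtInfty z) (hw : AtWorstPoleAtInfty w) :
    ∃ r Z, Z ≠ 0 ∧ AsympDeriv z r Z := by
  refine (hz.asympDeriv_zero_or_leading hzd).resolve_left fun hzero => ?_
  obtain ⟨m, hm⟩ := hy.exists_asymp
  obtain ⟨n, hn⟩ := hw.exists_asymp
  exact false_of_two_mul_add_lt_one hB4 (hzero (-(m + n + 1))) hm hn (by omega) (by omega)
    (by omega)

lemma exists_asympDeriv_zero_y (hB4 : ∀ᶠ t in atInfty, B4Eqs a0 a1 a2 a3 a4 x y z w t)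
    (hxd : ∀ᶠ t in atInfty, DifferentiableAt ℂ x t)
    (hyd : ∀ᶠ t in atInfty, DifferentiableAt ℂ y t)
    (hwd : ∀ᶠ t in atInfty, DifferentiableAt ℂ w t) (hx : AtWorstPoleAtInfty x)
    (hy : AtWorstPoleAtInfty y) (hw : AtWorstPoleAtInfty w) {r : ℤ} {Z : ℂ} (hZ : Z ≠ 0)
    (hz : AsympDeriv z r Z) : ∃ Y₀, AsympDeriv y 0 Y₀ := by
  refine (hy.asympDeriv_or_leading_gt hyd 0).resolve_right ?_
  rintro ⟨q, hq, Y, hY, hyq⟩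
  rcases hw.asympDeriv_or_leading_gt hwd q with ⟨W, hwq⟩ | ⟨s, hqs, W, hW, hws⟩
  · exact false_of_pole_y hB4 hxd hx hq hY hZ hyq hz hwq
  · exact false_of_pole_w hB4 (by omega) hqs hW hZ hws hyq.1 hz

lemma exists_asympDeriv_zero_w (hB4 : ∀ᶠ t in atInfty, B4Eqs a0 a1 a2 a3 a4 x y z w t)
    (hwd : ∀ᶠ t in atInfty, DifferentiableAt ℂ w t) (hw : AtWorstPoleAtInfty w)
    {r : ℤ} {Y₀ Z : ℂ} (hZ : Z ≠ 0) (hz : AsympDeriv z r Z) (hy : Asymp y 0 Y₀) :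
    ∃ W₀, AsympDeriv w 0 W₀ := by
  refine (hw.asympDeriv_or_leading_gt hwd 0).resolve_right ?_
  rintro ⟨s, hs, W, hW, hws⟩
  exact false_of_pole_w hB4 hs hs hW hZ hws hy hz

lemma exists_asymp_z_mul_two_y_add_two_w_sub_one
    (hB4 : ∀ᶠ t in atInfty, B4Eqs a0 a1 a2 a3 a4 x y z w t)
    {r : ℤ} {Z : ℂ} (hr : 1 ≤ r) (hZ : Z ≠ 0) (hz : AsympDeriv z r Z) :
    ∃ c, Asymp (fun t => z t * (2 * y t + 2 * w t - 1)) 0 c := by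
  obtain ⟨δ, hδ⟩ := asymp_id.exists_of_le hr
  have hzzv : Asymp (fun t => z t * z t * (2 * y t + 2 * w t - 1)) r
      (r * Z - (1 - 2 * a4) * Z - δ) :=
    ((hz.2.sub (hz.1.const_mul _)).sub hδ).congr <| hB4.mono fun t ht => by
      simp only [ht.2.2.1]; ring
  have hzv := hzzv.div hz.1 hZ
  rw [sub_self] at hzv
  refine ⟨_, hzv.congr ?_⟩
  filter_upwards [hz.1.eventually_ne_zero hZ] with t ht
  field_simp

lemma limit_add_limit_eq_half (hB4 : ∀ᶠ t in atInfty, B4Eqs a0 a1 a2 a3 a4 x y z w t)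
    {r : ℤ} {Y₀ Z W₀ : ℂ} (hr : 1 ≤ r) (hZ : Z ≠ 0) (hz : AsympDeriv z r Z)
    (hy : Asymp y 0 Y₀) (hw : Asymp w 0 W₀) : Y₀ + W₀ = 1 / 2 := by
  obtain ⟨c, hc⟩ := exists_asymp_z_mul_two_y_add_two_w_sub_one hB4 hr hZ hz
  have hv : Tendsto (fun t => 2 * y t + 2 * w t - 1) atInfty (𝓝 0) :=
    ((hc.div hz.1 hZ).tendsto_zero_of_neg (by omega)).congr' <|
      (hz.1.eventually_ne_zero hZ).mono fun t ht => by field_simp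
  have := tendsto_nhds_unique (asymp_zero_iff.1 (((hy.const_mul 2).add (hw.const_mul 2)).sub
    (asymp_const 1))) hv
  linear_combination this / 2

lemma limit_w_eq_zero (hB4 : ∀ᶠ t in atInfty, B4Eqs a0 a1 a2 a3 a4 x y z w t)
    {r : ℤ} {Y₀ Z W₀ : ℂ} (hr : 1 ≤ r) (hZ : Z ≠ 0) (hz : AsympDeriv z r Z)
    (hy : Asymp y 0 Y₀) (hw : AsympDeriv w 0 W₀) : W₀ = 0 := by
  by_contra hW
  obtain ⟨c, hc⟩ := exists_asymp_z_mul_two_y_add_two_w_sub_one hB4 hr hZ hz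
  -- the `w`-equation reads `2zw² = tw' + 2z(2y + 2w - 1)w + (1 - 2a₄)w + 2a₃y - a₃`
  have hzww := (((hw.2.add ((hc.mul hw.1).const_mul 2)).add
    (hw.1.const_mul (1 - 2 * a4))).add (hy.const_mul (2 * a3))).sub (asymp_const a3)
  have hww : Asymp (fun t => 2 * (w t * w t)) 0 (2 * (W₀ * W₀)) := (hw.1.mul hw.1).const_mul 2
  have hz0 := (hzww.div hww (by simpa using hW)).congr (g := z) <| by
    filter_upwards [hB4, hw.1.eventually_ne_zero hW] with t ht hwt
    simp only [ht.2.2.2]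
    field_simp
    ring
  exact hZ (hz.1.unique (hz0.of_lt (by omega)))

lemma exists_asymp_x (hB4 : ∀ᶠ t in atInfty, B4Eqs a0 a1 a2 a3 a4 x y z w t)
    {Y₀ : ℂ} (hy : AsympDeriv y 0 Y₀) (hY : Y₀ * (1 - Y₀) ≠ 0) : ∃ X₀, Asymp x 0 X₀ := by
  have hnum := (hy.2.add (hy.1.const_mul (1 - 2 * a2 - 2 * a3 - 2 * a4))).sub (asymp_const a1)
  have hden : Asymp (fun t => 2 * (y t * (1 - y t))) 0 (2 * (Y₀ * (1 - Y₀))) :=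
    (hy.1.mul ((asymp_const 1).sub hy.1)).const_mul 2
  refine ⟨_, (hnum.div hden (by simpa using hY)).congr (g := x) ?_⟩
  filter_upwards [hB4, hden.eventually_ne_zero (by simpa using hY)] with t ht hyt
  simp only [ht.2.1]
  rw [div_eq_iff hyt]
  ring

end B4

theorem B4_meromorphic_at_infinity_structure_general (a0 a1 a2 a3 a4 : ℂ)
    (R : ℝ) (x y z w : ℂ → ℂ)
    (hsol : SolvesB4On a0 a1 a2 a3 a4 x y z w {t : ℂ | R < ‖t‖})
    (hx : AtWorstPoleAtInfty x) (hy : AtWorstPoleAtInfty y)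
    (hz : AtWorstPoleAtInfty z) (hw : AtWorstPoleAtInfty w) :
    (∃ n : ℕ, 1 ≤ n ∧ PoleAtInftyOfOrder z n) ∧
      HoloAtInfty x ∧ HoloAtInfty y ∧ HoloAtInfty w := by
  have hev := (tendsto_norm_atInfty.eventually_gt_atTop R).mono hsol
  have hB4 := hev.mono fun t ht => ht.2.2.2.2
  have hxd := hev.mono fun t ht => ht.1
  have hyd := hev.mono fun t ht => ht.2.1
  have hwd := hev.mono fun t ht => ht.2.2.2.1
  obtain ⟨r, Z, hZ, hzr⟩ := B4.exists_leading_z hB4 (hev.mono fun t ht => ht.2.2.1) hy hz hw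
  obtain ⟨Y₀, hy₀⟩ := B4.exists_asympDeriv_zero_y hB4 hxd hyd hwd hx hy hw hZ hzr
  obtain ⟨W₀, hw₀⟩ := B4.exists_asympDeriv_zero_w hB4 hwd hw hZ hzr hy₀.1
  have hr : 1 ≤ r := by
    by_contra!
    exact B4.false_of_two_mul_add_lt_one hB4 hzr hy₀.1 hw₀.1 (by omega) (by omega) (by omega)
  have hW₀ : W₀ = 0 := B4.limit_w_eq_zero hB4 hr hZ hzr hy₀.1 hw₀
  have hY₀ : Y₀ = 1 / 2 := by
    linear_combination B4.limit_add_limit_eq_half hB4 hr hZ hzr hy₀.1 hw₀.1 - hW₀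
  obtain ⟨X₀, hx₀⟩ := B4.exists_asymp_x hB4 hy₀ (by rw [hY₀]; norm_num)
  refine ⟨⟨r.toNat, by omega, Z, hZ, ?_⟩, ⟨X₀, asymp_zero_iff.1 hx₀⟩,
    ⟨Y₀, asymp_zero_iff.1 hy₀.1⟩, ⟨W₀, asymp_zero_iff.1 hw₀.1⟩⟩
  simpa [Asymp, ← zpow_natCast, Int.toNat_of_nonneg (by omega : 0 ≤ r)] using hzr.1

/-- For a solution of the Sasano system `B₄⁽¹⁾` on an annulus `{|t| > R}` whose components
have at worst poles at `t = ∞`, the component `z` has a pole of some order `n ≥ 1`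
at `t = ∞` while `x, y, w` are holomorphic at `t = ∞`. -/
theorem B4_meromorphic_at_infinity_structure (a0 a1 a2 a3 a4 : ℂ)
    (hsum : a0 + a1 + 2*a2 + 2*a3 + 2*a4 = 1) (R : ℝ) (x y z w : ℂ → ℂ)
    (hsol : SolvesB4On a0 a1 a2 a3 a4 x y z w {t : ℂ | R < ‖t‖})
    (hx : AtWorstPoleAtInfty x) (hy : AtWorstPoleAtInfty y)
    (hz : AtWorstPoleAtInfty z) (hw : AtWorstPoleAtInfty w) :
    (∃ n : ℕ, 1 ≤ n ∧ PoleAtInftyOfOrder z n) ∧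
      HoloAtInfty x ∧ HoloAtInfty y ∧ HoloAtInfty w :=
  B4_meromorphic_at_infinity_structure_general a0 a1 a2 a3 a4 R x y z w hsol hx hy hz hw
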